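/- Let n be a positive natural number, let K be a symmetric positive definite real n×n matrix, and let z, r ∈ ℝⁿ with z ≠ 0 and the curvature condition zᵀr > 0. Then the BFGS-updated matrix K' = K − (Kz)(Kz)ᵀ/(zᵀKz) + r rᵀ/(zᵀr) is symmetric positive definite. -/

import Mathlib

open Matrix

lemma vecMulVec_mulVec' {n : ℕ} (a b x : Fin n → ℝ) :
    vecMulVec a b *ᵥ x = (b ⬝ᵥ x) • a := by
  ext i
  simp only [vecMulVec_apply, mulVec, dotProduct, Pi.smul_apply, smul_eq_mul,
    Finset.sum_mul]
  exact Finset.sum_congr rfl fun j _ => by ring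

/-- If `K` is symmetric positive definite, `z ≠ 0` and the curvature condition
`zᵀr > 0` holds, then the BFGS-updated matrix
`K' = K − (Kz)(Kz)ᵀ/(zᵀKz) + r rᵀ/(zᵀr)` is symmetric positive definite. -/
theorem bfgs_posDef (n : ℕ) (hn : 0 < n) (K : Matrix (Fin n) (Fin n) ℝ)
    (hK : K.PosDef) (z r : Fin n → ℝ)
    (hz : z ≠ 0) (hzr : 0 < z ⬝ᵥ r) :
    (K - (z ⬝ᵥ K.mulVec z)⁻¹ • vecMulVec (K.mulVec z) (K.mulVec z)
       + (z ⬝ᵥ r)⁻¹ • vecMulVec r r).PosDef := by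
  have hKh := hK.isHermitian
  have htr : Kᵀ = K := by
    ext i j
    have := congrFun (congrFun hKh i) j
    simpa [conjTranspose_apply] using this
  have hKzz : 0 < z ⬝ᵥ K *ᵥ z := by have := hK.dotProduct_mulVec_pos hz; rwa [star_trivial] at this
  have hsym : ∀ u v : Fin n → ℝ, u ⬝ᵥ K *ᵥ v = v ⬝ᵥ K *ᵥ u := by
    intro u v
    rw [dotProduct_mulVec, dotProduct_comm, ← mulVec_transpose, htr]
  refine posDef_iff_dotProduct_mulVec.mpr ⟨?_, ?_⟩
  · ext i j
    simp only [conjTranspose_apply, Matrix.sub_apply, Matrix.add_apply, Matrix.smul_apply, vecMulVec_apply,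
      smul_eq_mul, star_trivial]
    rw [show K j i = K i j from by conv_lhs => rw [← htr, transpose_apply]]
    ring
  · intro x hx
    have hquad : x ⬝ᵥ ((K - (z ⬝ᵥ K *ᵥ z)⁻¹ • vecMulVec (K *ᵥ z) (K *ᵥ z)
        + (z ⬝ᵥ r)⁻¹ • vecMulVec r r) *ᵥ x)
        = x ⬝ᵥ K *ᵥ x - (z ⬝ᵥ K *ᵥ z)⁻¹ * (x ⬝ᵥ K *ᵥ z) ^ 2
          + (z ⬝ᵥ r)⁻¹ * (r ⬝ᵥ x) ^ 2 := by
      simp only [add_mulVec, sub_mulVec, smul_mulVec, vecMulVec_mulVec',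
        dotProduct_add, dotProduct_sub, dotProduct_smul, smul_eq_mul, smul_smul]
      rw [show (K *ᵥ z) ⬝ᵥ x = x ⬝ᵥ K *ᵥ z from dotProduct_comm _ _,
        show x ⬝ᵥ r = r ⬝ᵥ x from dotProduct_comm _ _]
      ring
    rw [show (star x : Fin n → ℝ) = x from funext fun i => star_trivial _, hquad]
    set q := z ⬝ᵥ K *ᵥ z with hq
    set c := x ⬝ᵥ K *ᵥ z with hc
    -- Cauchy-Schwarz: consider y = x - (c/q) • z
    set y := x - (c/q) • z with hy
    have hyy : y ⬝ᵥ K *ᵥ y = x ⬝ᵥ K *ᵥ x - q⁻¹ * c ^ 2 := by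
      simp only [hy, sub_dotProduct, smul_dotProduct, mulVec_sub, mulVec_smul,
        dotProduct_sub, dotProduct_smul, smul_eq_mul]
      rw [show z ⬝ᵥ K *ᵥ x = c from (hsym z x).trans rfl, ← hq, ← hc]
      field_simp
      ring
    by_cases hy0 : y = 0
    · -- x = (c/q) • z, c/q ≠ 0
      have hxz : x = (c/q) • z := by
        have := hy0; rw [hy, sub_eq_zero] at this; exact this
      have hcq : c / q ≠ 0 := by
        intro h
        apply hx
        rw [hxz, h, zero_smul]
      have hrx : r ⬝ᵥ x = (c/q) * (z ⬝ᵥ r) := by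
        rw [hxz, dotProduct_smul, smul_eq_mul, dotProduct_comm]
      have h1 : x ⬝ᵥ K *ᵥ x - q⁻¹ * c ^ 2 = 0 := by rw [← hyy, hy0]; simp
      rw [h1, zero_add, hrx]
      have : 0 < ((c/q) * (z ⬝ᵥ r)) ^ 2 := by
        positivity
      positivity
    · have h1 : 0 < x ⬝ᵥ K *ᵥ x - q⁻¹ * c ^ 2 := by rw [← hyy]; have := hK.dotProduct_mulVec_pos hy0; rwa [star_trivial] at this
      have h2 : 0 ≤ (z ⬝ᵥ r)⁻¹ * (r ⬝ᵥ x) ^ 2 := by positivity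
      linarith
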